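/- For every n, every ε ∈ (0,1), and every set Q ⊆ [n]×[n] with |Q| ≤ n/ε, there exist positive semidefinite matrices A₀, A₁ ∈ {0,1}^{n×n} such that (A₀)_{ij} = (A₁)_{ij} for every (i,j) ∈ Q and for every i = j, yet λ_max(A₁) − λ_max(A₀) ≥ εn/4 − 1. (Consequently, any deterministic, possibly adaptive, algorithm that approximates all eigenvalues of a binary PSD matrix to additive error εn/8 must read Ω(n/ε) entries.) -/

import Mathlib

open Matrix BigOperators

/-!
The queried positions form a graph on `[n]` with at most `n/ε` edges. Turán's theorem, applied
to its complement, gives an independent set `S` with `n² ≤ |S| (n + 2|E|)`, hence `|S| ≥ εn/4`.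
Take `A₀ = I` and let `A₁` be `I` with the all-ones block on `S × S`. Since no queried
off-diagonal position lies in `S × S`, the two matrices agree on `Q` and on the diagonal.
`A₁ = 1_S 1_Sᵀ + diag(1_{Sᶜ})` is PSD, and `A₁ 1_S = |S| 1_S` makes `|S|²` an eigenvalue of
`A₁ᵀ A₁`, so the top singular value of `A₁` is at least `|S|`, while that of `I` is `1`.
-/

/-- The spectral (operator) norm of a real square matrix. -/
noncomputable def specNorm {m : ℕ} (M : Matrix (Fin m) (Fin m) ℝ) : ℝ :=
  ‖LinearMap.toContinuousLinearMap (Matrix.toEuclideanLin M)‖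

/-- The `n × n` all-ones matrix. -/
def allOnes (m : ℕ) : Matrix (Fin m) (Fin m) ℝ := Matrix.of fun _ _ => 1

/-- Euclidean norm of a vector in `ℝⁿ`. -/
noncomputable def vnorm {m : ℕ} (x : Fin m → ℝ) : ℝ := Real.sqrt (∑ i, (x i) ^ 2)

/-- The (unsorted) singular values of a real square matrix: square roots of the
eigenvalues of `Aᵀ A`. -/
noncomputable def svRaw {m : ℕ} (A : Matrix (Fin m) (Fin m) ℝ) : Fin m → ℝ :=
  fun j => Real.sqrt ((Matrix.isHermitian_iff_isSymm.mpr (Matrix.isSymm_transpose_mul_self A)).eigenvalues j)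

/-- `sval A i` is the `i`-th largest singular value of `A` (1-based indexing);
it is `0` for `i = 0` and for `i > m`. -/
noncomputable def sval {m : ℕ} (A : Matrix (Fin m) (Fin m) ℝ) (i : ℕ) : ℝ :=
  if h : 1 ≤ i ∧ i ≤ m then (svRaw A ∘ Tuple.sort (svRaw A)) ⟨m - i, by omega⟩ else 0

/-- The nuclear (Schatten-1) norm of a real square matrix: the sum of its singular values. -/
noncomputable def nuclearNorm {m : ℕ} (A : Matrix (Fin m) (Fin m) ℝ) : ℝ :=
  ∑ j, svRaw A j

/-- The smallest eigenvalue of a symmetric real matrix, via the Rayleigh quotient. -/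
noncomputable def lamMin {m : ℕ} (A : Matrix (Fin m) (Fin m) ℝ) : ℝ :=
  sInf {r : ℝ | ∃ x : Fin m → ℝ, vnorm x = 1 ∧ r = x ⬝ᵥ (A *ᵥ x)}

open Finset

namespace SimpleGraph

variable {V : Type*} [Fintype V] (G : SimpleGraph V)

theorem cliqueFree_compl_indepNum_add_one : Gᶜ.CliqueFree (G.indepNum + 1) := fun t ht => by
  have := (G.isClique_compl.1 ht.isClique).card_le_indepNum
  rw [ht.card_eq] at this
  omega

theorem one_le_indepNum [Nonempty V] : 1 ≤ G.indepNum := by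
  obtain ⟨v⟩ := ‹Nonempty V›
  simpa using (G.isClique_compl.1 (by simp)).card_le_indepNum (t := {v})

variable [DecidableRel G.Adj]

theorem CliqueFree.two_mul_mul_card_edgeFinset_le {r : ℕ} (cf : G.CliqueFree (r + 1)) :
    2 * r * #G.edgeFinset ≤ (r - 1) * Fintype.card V ^ 2 := by
  rcases r.eq_zero_or_pos with rfl | hr
  · simp
  obtain ⟨H, _, maxH⟩ := exists_isTuranMaximal (V := V) hr
  have hiso := ((isTuranMaximal_iff_nonempty_iso_turanGraph hr).mp maxH).some
  calc 2 * r * #G.edgeFinset ≤ 2 * r * #H.edgeFinset := Nat.mul_le_mul_left _ (maxH.2 cf)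
    _ = 2 * r * #(turanGraph (Fintype.card V) r).edgeFinset := by rw [hiso.card_edgeFinset_eq]
    _ ≤ (r - 1) * Fintype.card V ^ 2 := mul_card_edgeFinset_turanGraph_le

theorem card_edgeFinset_add_card_edgeFinset_compl [DecidableEq V] :
    #G.edgeFinset + #Gᶜ.edgeFinset = (Fintype.card V).choose 2 := by
  rw [← card_edgeFinset_top_eq_card_choose_two, ← card_union_of_disjoint
    (disjoint_edgeFinset.2 disjoint_compl_right), ← edgeFinset_sup]
  congr 1
  ext e
  simp only [mem_edgeFinset, sup_compl_eq_top]

/-- Turán's theorem for the complement, in the form of the Caro–Wei bound `α ≥ n² / (n + 2|E|)`. -/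
theorem sq_card_le_indepNum_mul :
    Fintype.card V ^ 2 ≤ G.indepNum * (Fintype.card V + 2 * #G.edgeFinset) := by
  classical
  cases isEmpty_or_nonempty V
  · simp
  have hr := G.one_le_indepNum
  have hn : 1 ≤ Fintype.card V := Fintype.card_pos
  have hturan := G.cliqueFree_compl_indepNum_add_one.two_mul_mul_card_edgeFinset_le
  have hsum := G.card_edgeFinset_add_card_edgeFinset_compl
  have hchoose : 2 * (Fintype.card V).choose 2 = Fintype.card V * (Fintype.card V - 1) := by
    rw [Nat.choose_two_right, Nat.mul_div_cancel' (Nat.even_mul_pred_self _).two_dvd]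
  zify [hr, hn] at *
  linear_combination hturan - 2 * (G.indepNum : ℤ) * hsum - G.indepNum * hchoose

theorem mul_card_le_four_mul_indepNum {ε : ℝ} (hε : 0 < ε) (hε₂ : ε ≤ 2)
    (hE : ε * #G.edgeFinset ≤ Fintype.card V) : ε * Fintype.card V ≤ 4 * G.indepNum := by
  have hturan : (Fintype.card V : ℝ) ^ 2 ≤ G.indepNum * (Fintype.card V + 2 * #G.edgeFinset) := by
    exact_mod_cast G.sq_card_le_indepNum_mul
  rcases (Fintype.card V).eq_zero_or_pos with h0 | hpos
  · simp [h0]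
  have hpos' : (0 : ℝ) < Fintype.card V := by exact_mod_cast hpos
  refine le_of_mul_le_mul_left ?_ hpos'
  nlinarith [mul_le_mul_of_nonneg_left hturan hε.le,
    mul_le_mul_of_nonneg_left hE (Nat.cast_nonneg (α := ℝ) G.indepNum),
    mul_nonneg (mul_nonneg (Nat.cast_nonneg (α := ℝ) G.indepNum) hpos'.le) (sub_nonneg.2 hε₂)]

theorem card_edgeFinset_le_of_adj [DecidableEq V] {Q : Finset (V × V)}
    (hQ : ∀ a b, G.Adj a b → (a, b) ∈ Q ∨ (b, a) ∈ Q) : #G.edgeFinset ≤ #Q := by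
  refine (card_le_card (s := G.edgeFinset) (t := Q.image fun p => s(p.1, p.2)) fun e he => ?_).trans
    card_image_le
  induction e using Sym2.ind with
  | h a b =>
    rcases hQ a b (mem_edgeFinset.1 he) with h | h
    · exact mem_image.2 ⟨_, h, rfl⟩
    · exact mem_image.2 ⟨_, h, Sym2.eq_swap⟩

end SimpleGraph

section blockOnes

variable {ι : Type*} [DecidableEq ι] (S : Finset ι)

def blockOnes : Matrix ι ι ℝ :=
  of fun i j => if i = j ∨ (i ∈ S ∧ j ∈ S) then 1 else 0

theorem blockOnes_apply_eq_zero_or_one (i j : ι) :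
    blockOnes S i j = 0 ∨ blockOnes S i j = 1 := by
  simp only [blockOnes, of_apply]
  split_ifs <;> simp

theorem blockOnes_apply_eq_one_apply {G : SimpleGraph ι} (hS : G.IsIndepSet S) {i j : ι}
    (h : i = j ∨ G.Adj i j) : blockOnes S i j = (1 : Matrix ι ι ℝ) i j := by
  rcases h with rfl | hadj
  · simp [blockOnes]
  · have hne := hadj.ne
    have hnS : ¬(i ∈ S ∧ j ∈ S) := fun ⟨hi, hj⟩ => hS hi hj hne hadj
    simp [blockOnes, hne, hnS]

theorem transpose_blockOnes : (blockOnes S)ᵀ = blockOnes S := by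
  ext i j
  simp only [blockOnes, transpose_apply, of_apply, eq_comm (a := j), and_comm]

theorem blockOnes_eq_vecMulVec_add_diagonal :
    blockOnes S = vecMulVec ((S : Set ι).indicator 1) ((S : Set ι).indicator 1) +
      diagonal ((S : Set ι)ᶜ.indicator 1) := by
  ext i j
  by_cases hi : i ∈ S <;> by_cases hj : j ∈ S <;> by_cases hij : i = j <;>
    simp_all [blockOnes, vecMulVec_apply]

variable [Fintype ι]

theorem posSemidef_blockOnes : (blockOnes S).PosSemidef := by
  rw [blockOnes_eq_vecMulVec_add_diagonal]
  refine .add ?_ (.diagonal fun i => Set.indicator_nonneg (fun _ _ => zero_le_one) i)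
  simpa using posSemidef_vecMulVec_self_star ((S : Set ι).indicator (1 : ι → ℝ))

theorem blockOnes_mulVec_indicator :
    blockOnes S *ᵥ (S : Set ι).indicator 1 = (#S : ℝ) • (S : Set ι).indicator 1 := by
  ext i
  by_cases hi : i ∈ S
  · simp [blockOnes, mulVec, dotProduct, Set.indicator_apply, hi,
      filter_true_of_mem fun x (hx : x ∈ S) => Or.inr hx]
  · simp [blockOnes, mulVec, dotProduct, Set.indicator_apply, hi]

end blockOnes

section singularValues

variable {m : ℕ}

theorem sval_nonneg (A : Matrix (Fin m) (Fin m) ℝ) (i : ℕ) : 0 ≤ sval A i := by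
  unfold sval svRaw
  split_ifs
  exacts [Real.sqrt_nonneg _, le_rfl]

theorem svRaw_le_sval_one (A : Matrix (Fin m) (Fin m) ℝ) (j : Fin m) : svRaw A j ≤ sval A 1 := by
  rw [sval, dif_pos ⟨le_rfl, j.pos⟩]
  conv_lhs => rw [← Equiv.apply_symm_apply (Tuple.sort (svRaw A)) j]
  exact Tuple.monotone_sort (svRaw A) (Fin.le_def.2 (Nat.le_sub_one_of_lt (Fin.is_lt _)))

theorem exists_eigenvalues_eq_of_mulVec_eq {B : Matrix (Fin m) (Fin m) ℝ} (hB : B.IsHermitian)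
    {u : Fin m → ℝ} (hu : u ≠ 0) {μ : ℝ} (h : B *ᵥ u = μ • u) :
    ∃ j, hB.eigenvalues j = μ := by
  have hμ : Module.End.HasEigenvalue (toLin' B) μ :=
    Module.End.hasEigenvalue_of_hasEigenvector
      ⟨Module.End.mem_eigenspace_iff.2 (by rwa [toLin'_apply]), hu⟩
  have := hμ.mem_spectrum
  rwa [spectrum_toLin', hB.spectrum_real_eq_range_eigenvalues] at this

theorem le_sval_one_of_mulVec_eq {A : Matrix (Fin m) (Fin m) ℝ} (hA : Aᵀ = A)
    {u : Fin m → ℝ} (hu : u ≠ 0) {c : ℝ} (hc : 0 ≤ c) (h : A *ᵥ u = c • u) :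
    c ≤ sval A 1 := by
  have hsq : (Aᵀ * A) *ᵥ u = c ^ 2 • u := by
    rw [← mulVec_mulVec, h, mulVec_smul, hA, h, smul_smul, sq]
  obtain ⟨j, hj⟩ := exists_eigenvalues_eq_of_mulVec_eq _ hu hsq
  calc c = svRaw A j := by rw [svRaw, hj, Real.sqrt_sq hc]
    _ ≤ sval A 1 := svRaw_le_sval_one A j

theorem sval_one_one_le : sval (1 : Matrix (Fin m) (Fin m) ℝ) 1 ≤ 1 := by
  unfold sval
  split_ifs with hm
  · have : Nonempty (Fin m) := ⟨⟨0, hm.2⟩⟩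
    have hspec := (isHermitian_iff_isSymm.mpr (isSymm_transpose_mul_self
      (1 : Matrix (Fin m) (Fin m) ℝ))).eigenvalues_mem_spectrum_real
    simp only [transpose_one, mul_one, spectrum.one_eq, Set.mem_singleton_iff] at hspec
    simp [svRaw, hspec]
  · exact zero_le_one

theorem card_le_sval_one_blockOnes (S : Finset (Fin m)) : (#S : ℝ) ≤ sval (blockOnes S) 1 := by
  rcases S.eq_empty_or_nonempty with rfl | ⟨i, hi⟩
  · simpa using sval_nonneg (blockOnes ∅) 1
  refine le_sval_one_of_mulVec_eq (transpose_blockOnes S) (fun h => ?_) (Nat.cast_nonneg _)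
    (blockOnes_mulVec_indicator S)
  simpa [hi] using congrFun h i

end singularValues

/-- **Query lower bound for deterministic eigenvalue approximation of binary PSD
matrices.** For any set `Q` of at most `n/ε` queried positions there are two binary PSD
matrices agreeing on `Q` and on the diagonal whose largest eigenvalues differ by at
least `εn/4 − 1`. -/
theorem binary_psd_query_lower_bound
    (n : ℕ) (ε : ℝ) (hε : ε ∈ Set.Ioo (0 : ℝ) 1)
    (Q : Finset (Fin n × Fin n)) (hQ : (Q.card : ℝ) ≤ n / ε) :
    ∃ A₀ A₁ : Matrix (Fin n) (Fin n) ℝ,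
      A₀.PosSemidef ∧ A₁.PosSemidef ∧
      (∀ i j, A₀ i j = 0 ∨ A₀ i j = 1) ∧
      (∀ i j, A₁ i j = 0 ∨ A₁ i j = 1) ∧
      (∀ p ∈ Q, A₀ p.1 p.2 = A₁ p.1 p.2) ∧
      (∀ i, A₀ i i = A₁ i i) ∧
      ε * n / 4 - 1 ≤ sval A₁ 1 - sval A₀ 1 := by
  classical
  obtain ⟨hε₀, hε₁⟩ := hε
  let G := SimpleGraph.fromRel fun i j : Fin n => (i, j) ∈ Q
  obtain ⟨S, hS⟩ := G.exists_isNIndepSet_indepNum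
  have hE : ε * #G.edgeFinset ≤ n := by
    have hGQ : (#G.edgeFinset : ℝ) ≤ #Q := by
      exact_mod_cast G.card_edgeFinset_le_of_adj fun a b h => ((SimpleGraph.fromRel_adj ..).1 h).2
    rw [le_div_iff₀ hε₀] at hQ
    nlinarith
  have hS_card : ε * n / 4 ≤ #S := by
    have := G.mul_card_le_four_mul_indepNum hε₀ (by linarith) (by simpa using hE)
    rw [hS.card_eq]
    simp only [Fintype.card_fin] at this
    linarith
  refine ⟨1, blockOnes S, .one, posSemidef_blockOnes S, fun i j => ?_,
    blockOnes_apply_eq_zero_or_one S, fun p hp => ?_, fun i => ?_, ?_⟩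
  · rw [one_apply]
    split_ifs <;> simp
  · refine (blockOnes_apply_eq_one_apply S hS.isIndepSet ?_).symm
    exact (em _).imp_right fun h => (SimpleGraph.fromRel_adj ..).2 ⟨h, .inl hp⟩
  · exact (blockOnes_apply_eq_one_apply S hS.isIndepSet (.inl rfl)).symm
  · linarith [card_le_sval_one_blockOnes S, sval_one_one_le (m := n)]
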